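/- arXiv:2310.04521 — 3 statements merged into one kernel-verified Lean document; each statement's English description precedes it below -/
import Mathlib

section
/- The LN-ReLU nonlinear layer is adjoint-equivariant: let L be a finite-dimensional Lie algebra over ℝ with Killing form B, let e : L → L be a Lie algebra automorphism, let x : Fin C → L, and let U ∈ ℝ^{C × C} be a weight matrix. Define the learned direction d_c = Σ_j U_{j c} • x_j and the layer output f(x)_c = x_c if B(x_c, d_c) ≤ 0, and f(x)_c = x_c + B(x_c, d_c) • d_c otherwise. Then f(e ∘ x)_c = e(f(x)_c) for every c ∈ Fin C. -/
/-! The learned direction is linear in the features, so it is carried along by `e`, and the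
Killing form is invariant under Lie algebra automorphisms; hence both the branch condition
and the output of the layer are transported by `e`. -/

section LNReLU

variable {K M M' ι : Type*} [CommRing K]
  [AddCommGroup M] [Module K M] [AddCommGroup M'] [Module K M']

theorem sum_smul_map [Fintype ι] (f : M →ₗ[K] M') (w : ι → K) (x : ι → M) :
    ∑ j, w j • f (x j) = f (∑ j, w j • x j) := by
  simp only [map_sum, map_smul]

variable [LinearOrder K]

def lnReLU (B : LinearMap.BilinForm K M) (v d : M) : M :=
  if B v d ≤ 0 then v else v + B v d • d

theorem lnReLU_map (B : LinearMap.BilinForm K M) (B' : LinearMap.BilinForm K M')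
    (f : M →ₗ[K] M') (v d : M) (hf : B' (f v) (f d) = B v d) :
    lnReLU B' (f v) (f d) = f (lnReLU B v d) := by
  unfold lnReLU
  rw [hf]
  split_ifs <;> simp only [map_add, map_smul]

end LNReLU

theorem LN_relu_equivariant_general
    (L : Type*) [LieRing L] [LieAlgebra ℝ L] (C : ℕ)
    (e : L ≃ₗ⁅ℝ⁆ L) (x : Fin C → L) (U : Matrix (Fin C) (Fin C) ℝ) (c : Fin C) :
    (if killingForm ℝ L ((e ∘ x) c) (∑ j : Fin C, U j c • (e ∘ x) j) ≤ 0 then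
        (e ∘ x) c
      else
        (e ∘ x) c +
          killingForm ℝ L ((e ∘ x) c) (∑ j : Fin C, U j c • (e ∘ x) j) •
            (∑ j : Fin C, U j c • (e ∘ x) j)) =
      e (if killingForm ℝ L (x c) (∑ j : Fin C, U j c • x j) ≤ 0 then
          x c
        else
          x c +
            killingForm ℝ L (x c) (∑ j : Fin C, U j c • x j) •
              (∑ j : Fin C, U j c • x j)) := by
  change lnReLU _ (e (x c)) (∑ j, U j c • e.toLinearEquiv.toLinearMap (x j)) =
    e.toLinearEquiv.toLinearMap (lnReLU _ (x c) (∑ j, U j c • x j))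
  rw [sum_smul_map]
  exact lnReLU_map _ _ _ _ _ (LieAlgebra.killingForm_of_equiv_apply e _ _)

/-- The LN-ReLU nonlinear layer is adjoint-equivariant: for a finite-dimensional Lie
algebra `L` over `ℝ` with Killing form `B`, a Lie algebra automorphism `e`, a feature
tuple `x : Fin C → L`, and a weight matrix `U ∈ ℝ^{C × C}`, with learned direction
`d_c = Σ_j U_{j c} • x_j`, the layer
`f(x)_c = if B(x_c, d_c) ≤ 0 then x_c else x_c + B(x_c, d_c) • d_c`
satisfies `f(e ∘ x)_c = e (f(x)_c)` for every channel `c`. -/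
theorem LN_relu_equivariant
    (L : Type*) [LieRing L] [LieAlgebra ℝ L] [Module.Finite ℝ L] (C : ℕ)
    (e : L ≃ₗ⁅ℝ⁆ L) (x : Fin C → L) (U : Matrix (Fin C) (Fin C) ℝ) (c : Fin C) :
    (if killingForm ℝ L ((e ∘ x) c) (∑ j : Fin C, U j c • (e ∘ x) j) ≤ 0 then
        (e ∘ x) c
      else
        (e ∘ x) c +
          killingForm ℝ L ((e ∘ x) c) (∑ j : Fin C, U j c • (e ∘ x) j) •
            (∑ j : Fin C, U j c • (e ∘ x) j)) =
      e (if killingForm ℝ L (x c) (∑ j : Fin C, U j c • x j) ≤ 0 then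
          x c
        else
          x c +
            killingForm ℝ L (x c) (∑ j : Fin C, U j c • x j) •
              (∑ j : Fin C, U j c • x j)) :=
  LN_relu_equivariant_general L C e x U c
end

section
/- The LN-LeakyReLU layer is adjoint-equivariant: let L be a finite-dimensional Lie algebra over ℝ with Killing form B, let e : L → L be a Lie algebra automorphism, let x : Fin C → L, U ∈ ℝ^{C × C}, α ∈ ℝ, and let f_ReLU(x)_c = x_c if B(x_c, d_c) ≤ 0 and x_c + B(x_c, d_c) • d_c otherwise, where d_c = Σ_j U_{j c} • x_j. Define g(x)_c = α • x_c + (1 − α) • f_ReLU(x)_c. Then g(e ∘ x)_c = e(g(x)_c) for every c ∈ Fin C. -/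
namespace LieAlgebra

variable {R L : Type*} [CommRing R] [Preorder R] [DecidableLE R] [LieRing L] [LieAlgebra R L]

/-- The layer's output on channel `c` is `lnLeakyReLU α (x c) (∑ j, U j c • x j)`. -/
noncomputable def lnLeakyReLU (α : R) (y d : L) : L :=
  α • y + (1 - α) •
    (if killingForm R L y d ≤ 0 then y else y + killingForm R L y d • d)

theorem lnLeakyReLU_map_equiv (e : L ≃ₗ⁅R⁆ L) (α : R) (y d : L) :
    lnLeakyReLU α (e y) (e d) = e (lnLeakyReLU α y d) := by
  unfold lnLeakyReLU
  rw [killingForm_of_equiv_apply]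
  split_ifs <;> simp only [map_add, map_smul]

end LieAlgebra

theorem LN_leaky_relu_equivariant_general
    (L : Type*) [LieRing L] [LieAlgebra ℝ L] (C : ℕ)
    (e : L ≃ₗ⁅ℝ⁆ L) (x : Fin C → L) (U : Matrix (Fin C) (Fin C) ℝ) (α : ℝ) (c : Fin C) :
    (α • (e ∘ x) c +
        (1 - α) •
          (if killingForm ℝ L ((e ∘ x) c) (∑ j : Fin C, U j c • (e ∘ x) j) ≤ 0 then
              (e ∘ x) c
            else
              (e ∘ x) c +
                killingForm ℝ L ((e ∘ x) c) (∑ j : Fin C, U j c • (e ∘ x) j) •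
                  (∑ j : Fin C, U j c • (e ∘ x) j))) =
      e (α • x c +
          (1 - α) •
            (if killingForm ℝ L (x c) (∑ j : Fin C, U j c • x j) ≤ 0 then
                x c
              else
                x c +
                  killingForm ℝ L (x c) (∑ j : Fin C, U j c • x j) •
                    (∑ j : Fin C, U j c • x j))) := by
  have direction_map : ∑ j : Fin C, U j c • (e ∘ x) j = e (∑ j : Fin C, U j c • x j) := by
    simp only [Function.comp_apply, map_sum, map_smul]
  rw [direction_map]
  exact LieAlgebra.lnLeakyReLU_map_equiv e α (x c) (∑ j : Fin C, U j c • x j)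

/-- The LN-LeakyReLU layer is adjoint-equivariant: for a finite-dimensional Lie algebra
`L` over `ℝ` with Killing form `B`, a Lie algebra automorphism `e`, a feature tuple
`x : Fin C → L`, a weight matrix `U ∈ ℝ^{C × C}` (learned direction
`d_c = Σ_j U_{j c} • x_j`) and `α ∈ ℝ`, the layer
`g(x)_c = α • x_c + (1 − α) • f_ReLU(x)_c`, where
`f_ReLU(x)_c = if B(x_c, d_c) ≤ 0 then x_c else x_c + B(x_c, d_c) • d_c`,
satisfies `g(e ∘ x)_c = e (g(x)_c)` for every channel `c`. -/
theorem LN_leaky_relu_equivariant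
    (L : Type*) [LieRing L] [LieAlgebra ℝ L] [Module.Finite ℝ L] (C : ℕ)
    (e : L ≃ₗ⁅ℝ⁆ L) (x : Fin C → L) (U : Matrix (Fin C) (Fin C) ℝ) (α : ℝ) (c : Fin C) :
    (α • (e ∘ x) c +
        (1 - α) •
          (if killingForm ℝ L ((e ∘ x) c) (∑ j : Fin C, U j c • (e ∘ x) j) ≤ 0 then
              (e ∘ x) c
            else
              (e ∘ x) c +
                killingForm ℝ L ((e ∘ x) c) (∑ j : Fin C, U j c • (e ∘ x) j) •
                  (∑ j : Fin C, U j c • (e ∘ x) j))) =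
      e (α • x c +
          (1 - α) •
            (if killingForm ℝ L (x c) (∑ j : Fin C, U j c • x j) ≤ 0 then
                x c
              else
                x c +
                  killingForm ℝ L (x c) (∑ j : Fin C, U j c • x j) •
                    (∑ j : Fin C, U j c • x j))) :=
  LN_leaky_relu_equivariant_general L C e x U α c
end

section
/- The LN-Max pooling layer is adjoint-equivariant: let L be a finite-dimensional Lie algebra over ℝ with Killing form B, let e : L → L be a Lie algebra automorphism, let x : Fin N → Fin C → L be N features with C channels each, and let W ∈ ℝ^{C × C}. Define the pooling score s(n, c) = B((x_n W)_c, x_n(c)), where (x_n W)_c = Σ_j W_{j c} • x_n(j). Then (i) the score is invariant: the score computed from the componentwise-transformed input n ↦ e ∘ x_n equals s(n, c) for all n, c; and (ii) if for each channel c the maximizer n*(c) = argmax_n s(n, c) is unique, then the max-pooled output of e ∘ x equals e applied to the max-pooled output of x, i.e., (e ∘ x)_{n*(c)}(c) = e(x_{n*(c)}(c)) with the same maximizing indices n*(c). -/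
namespace LieAlgebra

variable {R L L' ι : Type*} [CommRing R] [LieRing L] [LieAlgebra R L] [LieRing L']
  [LieAlgebra R L'] [Fintype ι]

noncomputable def lnMaxScore (W : Matrix ι ι R) (v : ι → L) (c : ι) : R :=
  killingForm R L (∑ j, W j c • v j) (v c)

theorem lnMaxScore_comp_lieEquiv (e : L ≃ₗ⁅R⁆ L') (W : Matrix ι ι R) (v : ι → L) (c : ι) :
    lnMaxScore W (e ∘ v) c = lnMaxScore W v c := by
  have mix_comp : ∑ j, W j c • (e ∘ v) j = e (∑ j, W j c • v j) := by
    simp only [Function.comp_apply, map_sum, map_smul]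
  rw [lnMaxScore, mix_comp, Function.comp_apply, killingForm_of_equiv_apply, lnMaxScore]

end LieAlgebra

theorem LN_max_pooling_equivariant_general
    (L : Type*) [LieRing L] [LieAlgebra ℝ L] (N C : ℕ)
    (e : L ≃ₗ⁅ℝ⁆ L) (x : Fin N → Fin C → L) (W : Matrix (Fin C) (Fin C) ℝ) :
    (∀ (n : Fin N) (c : Fin C),
        killingForm ℝ L (∑ j : Fin C, W j c • (e ∘ x n) j) ((e ∘ x n) c) =
          killingForm ℝ L (∑ j : Fin C, W j c • x n j) (x n c)) ∧
    (∀ nstar : Fin C → Fin N,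
        (∀ (c : Fin C) (n : Fin N), n ≠ nstar c →
            killingForm ℝ L (∑ j : Fin C, W j c • x n j) (x n c) <
              killingForm ℝ L (∑ j : Fin C, W j c • x (nstar c) j) (x (nstar c) c)) →
        ∀ c : Fin C,
          (∀ n : Fin N, n ≠ nstar c →
              killingForm ℝ L (∑ j : Fin C, W j c • (e ∘ x n) j) ((e ∘ x n) c) <
                killingForm ℝ L (∑ j : Fin C, W j c • (e ∘ x (nstar c)) j)
                  ((e ∘ x (nstar c)) c)) ∧
            (e ∘ x (nstar c)) c = e (x (nstar c) c)) := by
  have score_eq (n : Fin N) (c : Fin C) :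
      LieAlgebra.lnMaxScore W (e ∘ x n) c = LieAlgebra.lnMaxScore W (x n) c :=
    LieAlgebra.lnMaxScore_comp_lieEquiv e W (x n) c
  refine ⟨score_eq, fun nstar is_max c => ⟨fun n hn => ?_, rfl⟩⟩
  exact (score_eq n c).trans_lt ((is_max c n hn).trans_eq (score_eq (nstar c) c).symm)

/-- The LN-Max pooling layer is adjoint-equivariant: for a finite-dimensional Lie
algebra `L` over `ℝ` with Killing form `B`, a Lie algebra automorphism `e`, features
`x : Fin N → Fin C → L`, and a weight matrix `W ∈ ℝ^{C × C}`, with pooling score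
`s(n, c) = B(Σ_j W_{j c} • x_n(j), x_n(c))`:
(i) the score is invariant under applying `e` componentwise, and
(ii) if for each channel `c` the maximizer `n*(c)` is unique (it strictly dominates all
other indices), then `n*(c)` is also the unique maximizer for the transformed input and
the max-pooled output of `e ∘ x` is `e` applied to the max-pooled output of `x`. -/
theorem LN_max_pooling_equivariant
    (L : Type*) [LieRing L] [LieAlgebra ℝ L] [Module.Finite ℝ L] (N C : ℕ)
    (e : L ≃ₗ⁅ℝ⁆ L) (x : Fin N → Fin C → L) (W : Matrix (Fin C) (Fin C) ℝ) :
    (∀ (n : Fin N) (c : Fin C),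
        killingForm ℝ L (∑ j : Fin C, W j c • (e ∘ x n) j) ((e ∘ x n) c) =
          killingForm ℝ L (∑ j : Fin C, W j c • x n j) (x n c)) ∧
    (∀ nstar : Fin C → Fin N,
        (∀ (c : Fin C) (n : Fin N), n ≠ nstar c →
            killingForm ℝ L (∑ j : Fin C, W j c • x n j) (x n c) <
              killingForm ℝ L (∑ j : Fin C, W j c • x (nstar c) j) (x (nstar c) c)) →
        ∀ c : Fin C,
          (∀ n : Fin N, n ≠ nstar c →
              killingForm ℝ L (∑ j : Fin C, W j c • (e ∘ x n) j) ((e ∘ x n) c) <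
                killingForm ℝ L (∑ j : Fin C, W j c • (e ∘ x (nstar c)) j)
                  ((e ∘ x (nstar c)) c)) ∧
            (e ∘ x (nstar c)) c = e (x (nstar c) c)) :=
  LN_max_pooling_equivariant_general L N C e x W
end
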